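/- arXiv:1001.3461 — 3 statements merged into one kernel-verified Lean document; each statement's English description precedes it below -/
import Mathlib

section
/- Let s ∈ ℝ with s ≠ 0, let b ∈ ℝ and c ∈ ℂ. Then b² + 4|c|² < 1/s² holds if and only if for all x₀, x₁ ∈ ℝ and x₂ ∈ ℂ with (x₀, x₁, x₂) ≠ (0, 0, 0) and s²·x₀² = x₁² + |x₂|², one has x₀ ≠ b·x₁ + 2·Re(c·x₂). -/
/-!
Identify `(x₁, x₂) ∈ ℝ × ℂ` with a vector `y` of Euclidean `ℝ³` and put `v = (b, 2c̄)`; then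
`b x₁ + 2 Re(c x₂) = ⟪v, y⟫`, `‖v‖² = b² + 4|c|²` and `‖y‖² = x₁² + |x₂|²`. A real point of the
plane section is thus a nonzero `y` on the cone `s² ⟪v, y⟫² = ‖y‖²` (with `x₀ = ⟪v, y⟫`).
By Cauchy–Schwarz the cone is trivial when `s² ‖v‖² < 1`; otherwise, for a nonzero `w ⊥ v`,
`‖v + t w‖² = ‖v‖² + t² ‖w‖²` grows from `‖v‖²` to `∞` while `⟪v, v + t w⟫ = ‖v‖²` stays fixed,
so some `v + t w` lies on the cone.
-/

open ComplexConjugate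

open Module RealInnerProductSpace

section Cone

variable {E : Type*} [NormedAddCommGroup E] [InnerProductSpace ℝ E]

theorem exists_ne_zero_real_inner_eq_zero [FiniteDimensional ℝ E] (hE : 1 < finrank ℝ E)
    (v : E) : ∃ w ≠ 0, ⟪v, w⟫ = 0 := by
  have hspan : finrank ℝ (ℝ ∙ v) ≤ 1 := (finrank_span_le_card {v}).trans (by simp)
  have hperp : (ℝ ∙ v)ᗮ ≠ ⊥ := by
    rw [Ne, ← Submodule.finrank_eq_zero]
    have := (ℝ ∙ v).finrank_add_finrank_orthogonal
    omega
  obtain ⟨w, hw, hw0⟩ := Submodule.exists_mem_ne_zero_of_ne_bot hperp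
  exact ⟨w, hw0, Submodule.mem_orthogonal_singleton_iff_inner_right.mp hw⟩

theorem eq_zero_of_sq_mul_real_inner_sq_eq {v y : E} {s : ℝ} (hv : s ^ 2 * ‖v‖ ^ 2 < 1)
    (hy : s ^ 2 * ⟪v, y⟫ ^ 2 = ‖y‖ ^ 2) : y = 0 := by
  have hcs : ⟪v, y⟫ ^ 2 ≤ ‖v‖ ^ 2 * ‖y‖ ^ 2 := by
    rw [← mul_pow, ← sq_abs]
    exact pow_le_pow_left₀ (abs_nonneg _) (abs_real_inner_le_norm v y) 2
  have hy' : ‖y‖ ^ 2 * (1 - s ^ 2 * ‖v‖ ^ 2) ≤ 0 := by nlinarith [sq_nonneg s]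
  have hy0 : ‖y‖ ^ 2 ≤ 0 := by nlinarith [sq_nonneg ‖y‖]
  simpa using hy0

theorem exists_ne_zero_sq_mul_real_inner_sq_eq {v w : E} {s : ℝ} (hw : w ≠ 0) (hvw : ⟪v, w⟫ = 0)
    (hv : 1 ≤ s ^ 2 * ‖v‖ ^ 2) : ∃ y ≠ 0, s ^ 2 * ⟪v, y⟫ ^ 2 = ‖y‖ ^ 2 := by
  have hw' : 0 < ‖w‖ := norm_pos_iff.mpr hw
  set t := √(‖v‖ ^ 2 * (s ^ 2 * ‖v‖ ^ 2 - 1)) / ‖w‖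
  have ht : t ^ 2 * ‖w‖ ^ 2 = ‖v‖ ^ 2 * (s ^ 2 * ‖v‖ ^ 2 - 1) := by
    rw [div_pow, div_mul_cancel₀ _ (by positivity), Real.sq_sqrt (by nlinarith [sq_nonneg ‖v‖])]
  have hinner : ⟪v, v + t • w⟫ = ‖v‖ ^ 2 := by
    rw [inner_add_right, real_inner_smul_right, hvw, mul_zero, add_zero, real_inner_self_eq_norm_sq]
  have hnorm : ‖v + t • w‖ ^ 2 = ‖v‖ ^ 2 + t ^ 2 * ‖w‖ ^ 2 := by
    rw [norm_add_sq_real, real_inner_smul_right, hvw, norm_smul, Real.norm_eq_abs, mul_pow, sq_abs]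
    ring
  refine ⟨v + t • w, fun h => ?_, ?_⟩
  · have hv0 : ‖v‖ ^ 2 ≠ 0 := by intro h0; rw [h0, mul_zero] at hv; linarith
    rw [← hinner, h, inner_zero_right] at hv0
    exact hv0 rfl
  · rw [hinner, hnorm, ht]; ring

theorem sq_mul_norm_sq_lt_one_iff [FiniteDimensional ℝ E] (hE : 1 < finrank ℝ E) (v : E) (s : ℝ) :
    s ^ 2 * ‖v‖ ^ 2 < 1 ↔ ∀ y, s ^ 2 * ⟪v, y⟫ ^ 2 = ‖y‖ ^ 2 → y = 0 := by
  refine ⟨fun hv y hy => eq_zero_of_sq_mul_real_inner_sq_eq hv hy, fun h => ?_⟩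
  by_contra! hv
  obtain ⟨w, hw, hvw⟩ := exists_ne_zero_real_inner_eq_zero hE v
  obtain ⟨y, hy, hcone⟩ := exists_ne_zero_sq_mul_real_inner_sq_eq hw hvw hv
  exact hy (h y hcone)

end Cone

theorem finrank_withLp_real_prod_complex : finrank ℝ (WithLp 2 (ℝ × ℂ)) = 3 := by
  rw [(WithLp.linearEquiv 2 ℝ (ℝ × ℂ)).finrank_eq, finrank_prod, Complex.finrank_real_complex,
    finrank_self]

theorem norm_sq_toLp_real_prod_complex (x₁ : ℝ) (x₂ : ℂ) :
    ‖WithLp.toLp 2 (x₁, x₂)‖ ^ 2 = x₁ ^ 2 + ‖x₂‖ ^ 2 := by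
  rw [WithLp.prod_norm_sq_eq_of_L2, Real.norm_eq_abs, sq_abs]
  rfl

theorem real_inner_toLp_real_prod_complex (b x₁ : ℝ) (c x₂ : ℂ) :
    ⟪WithLp.toLp 2 (b, 2 * conj c), WithLp.toLp 2 (x₁, x₂)⟫ = b * x₁ + 2 * (c * x₂).re := by
  simp only [WithLp.prod_inner_apply, RCLike.inner_apply, conj_trivial, Complex.inner, map_mul,
    map_ofNat, Complex.conj_conj, Complex.mul_re, Complex.mul_im, Complex.re_ofNat, Complex.im_ofNat]
  ring

/-- Lemma 4.2: the plane `x₀ − b x₁ − c x₂ − c̄ x₃ = 0` corresponds to a point of the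
hyperbolic space iff it misses all real points of the quadric `Q_s`. -/
theorem stmt_0 (s b : ℝ) (hs : s ≠ 0) (c : ℂ) :
    b ^ 2 + 4 * ‖c‖ ^ 2 < 1 / s ^ 2 ↔
      ∀ (x₀ x₁ : ℝ) (x₂ : ℂ), ¬(x₀ = 0 ∧ x₁ = 0 ∧ x₂ = 0) →
        s ^ 2 * x₀ ^ 2 = x₁ ^ 2 + ‖x₂‖ ^ 2 →
        x₀ ≠ b * x₁ + 2 * (c * x₂).re := by
  set v : WithLp 2 (ℝ × ℂ) := WithLp.toLp 2 (b, 2 * conj c)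
  have hv : ‖v‖ ^ 2 = b ^ 2 + 4 * ‖c‖ ^ 2 := by
    rw [norm_sq_toLp_real_prod_complex, norm_mul, Complex.norm_conj, Complex.norm_two]; ring
  have hE : 1 < finrank ℝ (WithLp 2 (ℝ × ℂ)) := by simp [finrank_withLp_real_prod_complex]
  rw [← hv, lt_div_iff₀ (by positivity), mul_comm, sq_mul_norm_sq_lt_one_iff hE v s]
  constructor
  · intro h x₀ x₁ x₂ hne hq heq
    have hcone : s ^ 2 * ⟪v, WithLp.toLp 2 (x₁, x₂)⟫ ^ 2 = ‖WithLp.toLp 2 (x₁, x₂)‖ ^ 2 := by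
      rw [real_inner_toLp_real_prod_complex, norm_sq_toLp_real_prod_complex, ← heq, hq]
    obtain ⟨rfl, rfl⟩ : x₁ = 0 ∧ x₂ = 0 := by simpa using h _ hcone
    exact hne ⟨by simpa [hs] using hq, rfl, rfl⟩
  · rintro H ⟨x₁, x₂⟩ hcone
    by_contra hy
    rw [real_inner_toLp_real_prod_complex, norm_sq_toLp_real_prod_complex] at hcone
    exact H _ x₁ x₂ (fun ⟨_, h₁, h₂⟩ => hy (by simp [h₁, h₂])) hcone rfl
end

section
/- Let n ≥ 1 be an integer, d, t, c ∈ ℂ with |c| = 1, and r ∈ ℝ with 0 < r < 1, and assume 1 + r·d̄·t ≠ 0 and r + d̄·t ≠ 0. Define ξ(t) = c·(√((1+|d|²)(1−r²)))ⁿ · tⁿ / ((1 + r·d̄·t)·(r + d̄·t)^{n−1}) and η(t) = c⁻¹·(√((1+|d|²)(1−r²)))ⁿ / ((1 + r·d̄·t)^{n−1}·(r + d̄·t)). Then ξ(t)·η(t) = (u(t) − v(t))ⁿ, where u(t) = (d − r t)/(1 + r d̄ t) and v(t) = (r d − t)/(r + d̄ t). Hence the curve L(d,r,c) lies on the variety X₀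 = {x y = (u−v)ⁿ z²} (in the chart z = 1). -/
open ComplexConjugate

/-!
Clearing denominators, `u(t) - v(t) = t (1 + |d|²)(1 - r²) / ((1 + r d̄ t)(r + d̄ t))`, and
`(1 + |d|²)(1 - r²)` is exactly the square of the constant `√((1+|d|²)(1−r²))` in `ξ` and `η`.
In the product `ξ η` the factors `c`, `c⁻¹` cancel and the denominators combine to
`((1 + r d̄ t)(r + d̄ t))ⁿ`, so `ξ η = (u - v)ⁿ`.
-/

theorem div_sub_div_moebius {K : Type*} [Field K] (d e r t : K)
    (ha : 1 + r * e * t ≠ 0) (hb : r + e * t ≠ 0) :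
    (d - r * t) / (1 + r * e * t) - (r * d - t) / (r + e * t)
      = t * ((1 + e * d) * (1 - r ^ 2)) / ((1 + r * e * t) * (r + e * t)) := by
  rw [div_sub_div _ _ ha hb]
  ring

theorem mul_inv_pow_div_mul_pow_div {K : Type*} [Field K] {n : ℕ} (hn : 1 ≤ n)
    {c : K} (hc : c ≠ 0) (a b s t : K) :
    c * s ^ n * t ^ n / (a * b ^ (n - 1)) * (c⁻¹ * s ^ n / (a ^ (n - 1) * b))
      = (t * s ^ 2 / (a * b)) ^ n := by
  obtain ⟨m, rfl⟩ := Nat.exists_eq_add_of_le' hn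
  simp only [Nat.add_sub_cancel, div_pow, mul_pow, ← pow_mul]
  field_simp
  ring

theorem Complex.ofReal_sqrt_sq {x : ℝ} (hx : 0 ≤ x) : ((√x : ℝ) : ℂ) ^ 2 = x := by
  rw [← Complex.ofReal_pow, Real.sq_sqrt hx]

/-- The lifted curve L(d,r,c) (equation (3.8)) satisfies the equation of the variety
`X₀ = {x y = (u−v)ⁿ z²}` in the chart `z = 1`: `ξ(t)·η(t) = (u(t) − v(t))ⁿ`. -/
theorem stmt_4 (n : ℕ) (hn : 1 ≤ n) (d t c : ℂ) (hc : ‖c‖ = 1)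
    (r : ℝ) (hr0 : 0 < r) (hr1 : r < 1)
    (h1 : 1 + (r : ℂ) * conj d * t ≠ 0) (h2 : (r : ℂ) + conj d * t ≠ 0) :
    (c * ((Real.sqrt ((1 + ‖d‖ ^ 2) * (1 - r ^ 2)) : ℝ) : ℂ) ^ n * t ^ n /
        ((1 + (r : ℂ) * conj d * t) * ((r : ℂ) + conj d * t) ^ (n - 1))) *
      (c⁻¹ * ((Real.sqrt ((1 + ‖d‖ ^ 2) * (1 - r ^ 2)) : ℝ) : ℂ) ^ n /
        ((1 + (r : ℂ) * conj d * t) ^ (n - 1) * ((r : ℂ) + conj d * t)))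
      = ((d - (r : ℂ) * t) / (1 + (r : ℂ) * conj d * t)
          - ((r : ℂ) * d - t) / ((r : ℂ) + conj d * t)) ^ n := by
  have hc0 : c ≠ 0 := norm_ne_zero_iff.mp (hc ▸ one_ne_zero)
  have hsq : 0 ≤ (1 + ‖d‖ ^ 2) * (1 - r ^ 2) := mul_nonneg (by positivity) (by nlinarith)
  rw [mul_inv_pow_div_mul_pow_div hn hc0, div_sub_div_moebius _ _ _ _ h1 h2,
    Complex.ofReal_sqrt_sq hsq, Complex.conj_mul']
  push_cast
  ring
end

section
/- Let n ≥ 1 be an integer, v ∈ ℂ with v ≠ 0, and a ∈ ℝ with −1 < a < 0. Set m = |v|², d = a/v̄, r = √(a(1+a)/(a − m)) and t = d/r. Then for any c ∈ ℂ with |c| = 1, the number ξ(t) = c·(√((1+|d|²)(1−r²)))ⁿ · tⁿ / ((1 + r·d̄·t)·(r + d̄·t)^{n−1}) satisfies |ξ(t)|² = −a·(m − a)^{n−1}/(1 + a). -/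
open ComplexConjugate

/-! Since `d̄ t = |d|²/r` is real, both denominators are real, and `|ξ|²` splits as
`q₁ q₂ⁿ⁻¹` with `q₁ = s²|t|²/(1+|d|²)²` and `q₂ = s²|t|²/(r + |d|²/r)²`, where `s² = (1+|d|²)(1−r²)`.
With `|d|² = a²/m` and `r² = −a(1+a)/(m−a)` one finds `1 − r² = (m+a²)/(m−a)`,
`r² + |d|² = −a(m+a²)/(m(m−a))`, whence `q₁ = −a/(1+a)` and `q₂ = m − a`. -/

namespace Complex

lemma one_add_ofReal_mul_conj_mul_div_ofReal (d : ℂ) {r : ℝ} (hr : r ≠ 0) :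
    1 + (r : ℂ) * conj d * (d / r) = ((1 + ‖d‖ ^ 2 : ℝ) : ℂ) := by
  rw [mul_assoc, mul_div_assoc', mul_comm (conj d), mul_conj,
    mul_div_cancel₀ _ (ofReal_ne_zero.mpr hr), normSq_eq_norm_sq]
  push_cast
  rfl

lemma ofReal_add_conj_mul_div_ofReal (d : ℂ) (r : ℝ) :
    (r : ℂ) + conj d * (d / r) = (((r ^ 2 + ‖d‖ ^ 2) / r : ℝ) : ℂ) := by
  rw [mul_div_assoc', mul_comm (conj d), mul_conj, normSq_eq_norm_sq]
  push_cast
  field_simp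

lemma norm_sq_mul_pow_div_mul_pow (k : ℕ) (c d : ℂ) (hc : ‖c‖ = 1) (s : ℝ) {r : ℝ}
    (hr : r ≠ 0) :
    ‖c * (s : ℂ) ^ (k + 1) * (d / r) ^ (k + 1) /
        ((1 + (r : ℂ) * conj d * (d / r)) * ((r : ℂ) + conj d * (d / r)) ^ k)‖ ^ 2
      = s ^ 2 * ‖d‖ ^ 2 / (r ^ 2 * (1 + ‖d‖ ^ 2) ^ 2)
        * (s ^ 2 * ‖d‖ ^ 2 / (r ^ 2 + ‖d‖ ^ 2) ^ 2) ^ k := by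
  have hsplit : ∀ A B t : ℂ, c * (s : ℂ) ^ (k + 1) * t ^ (k + 1) / (A * B ^ k)
      = c * (s * t / A) * (s * t / B) ^ k := fun _ _ _ => by ring
  rw [hsplit, one_add_ofReal_mul_conj_mul_div_ofReal d hr,
    ofReal_add_conj_mul_div_ofReal d r]
  simp only [norm_mul, norm_pow, norm_div, hc, norm_real, Real.norm_eq_abs]
  rw [one_mul, mul_pow, ← pow_mul, mul_comm k 2, pow_mul]
  simp only [div_pow, mul_pow, sq_abs]
  field_simp

end Complex

lemma ratio_over_one_add_sq_eq {a m δ ρ : ℝ} (hm : 0 < m) (ha : a ≠ 0) (hma : m - a ≠ 0)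
    (ha1 : 1 + a ≠ 0) (hδ : δ = a ^ 2 / m) (hρ : ρ = -(a * (1 + a)) / (m - a)) :
    (1 + δ) * (1 - ρ) * δ / (ρ * (1 + δ) ^ 2) = -a / (1 + a) := by
  have : m + a ^ 2 ≠ 0 := by positivity
  subst hδ hρ
  field_simp
  ring

lemma ratio_over_add_sq_eq {a m δ ρ : ℝ} (hm : 0 < m) (ha : a ≠ 0) (hma : m - a ≠ 0)
    (hδ : δ = a ^ 2 / m) (hρ : ρ = -(a * (1 + a)) / (m - a)) :
    (1 + δ) * (1 - ρ) * δ / (ρ + δ) ^ 2 = m - a := by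
  have : m + a ^ 2 ≠ 0 := by positivity
  have hsum : ρ + δ = -a * (m + a ^ 2) / (m * (m - a)) := by
    subst hδ hρ
    field_simp
    ring
  rw [hsum, hδ, hρ]
  field_simp
  ring

/-- With `m = |v|²`, `d = a/v̄`, `r = √(a(1+a)/(a−m))`, `t = d/r` and `|c| = 1`, the
ξ-coordinate of L(d,r,c) over the point `(0,v)` satisfies
`|ξ(t)|² = −a(m−a)^{n−1}/(1+a)`. -/
theorem stmt_14 (n : ℕ) (hn : 1 ≤ n) (v : ℂ) (hv : v ≠ 0) (a : ℝ)
    (ha1 : -1 < a) (ha0 : a < 0) (m : ℝ) (hm : m = ‖v‖ ^ 2)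
    (d : ℂ) (hd : d = (a : ℂ) / conj v)
    (r : ℝ) (hr : r = Real.sqrt (a * (1 + a) / (a - m)))
    (t : ℂ) (ht : t = d / (r : ℂ))
    (c : ℂ) (hc : ‖c‖ = 1) :
    ‖(c * ((Real.sqrt ((1 + ‖d‖ ^ 2) * (1 - r ^ 2)) : ℝ) : ℂ) ^ n * t ^ n /
        ((1 + (r : ℂ) * conj d * t) * ((r : ℂ) + conj d * t) ^ (n - 1)))‖ ^ 2
      = -a * (m - a) ^ (n - 1) / (1 + a) := by
  obtain ⟨k, rfl⟩ := Nat.exists_eq_add_of_le' hn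
  have hm0 : 0 < m := hm ▸ by positivity
  have hma : 0 < m - a := by linarith
  have hδ : ‖d‖ ^ 2 = a ^ 2 / m := by
    rw [hd, hm, norm_div, Complex.norm_conj, Complex.norm_real, div_pow, Real.norm_eq_abs, sq_abs]
  have hρ : r ^ 2 = -(a * (1 + a)) / (m - a) := by
    rw [hr, Real.sq_sqrt (div_nonneg_of_nonpos (by nlinarith) (by linarith)), ← neg_sub m a,
      div_neg, neg_div]
  have hr0 : r ≠ 0 := by
    rw [hr]
    exact (Real.sqrt_pos.mpr (div_pos_of_neg_of_neg (by nlinarith) (by linarith))).ne'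
  have hρ1 : 0 ≤ 1 - r ^ 2 := by
    rw [hρ, sub_nonneg, div_le_one hma]
    nlinarith
  rw [ht, Nat.add_sub_cancel, Complex.norm_sq_mul_pow_div_mul_pow k c d hc _ hr0,
    Real.sq_sqrt (by positivity),
    ratio_over_one_add_sq_eq hm0 ha0.ne hma.ne' (by linarith) hδ hρ,
    ratio_over_add_sq_eq hm0 ha0.ne hma.ne' hδ hρ]
  ring
end
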